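/- Let x ∈ (0, 1/2) be irrational with by-excess digits b_1, b_2, …. Then b_1 ≥ 3 (so t_1 = 1 and n_1 = 1), and the regular continued fraction partial quotients of x are (b_1 − 1, n_2, b_{t_2} − 2, n_3, b_{t_3} − 2, …); that is, a_1(x) = b_1 − 1 and, for all j ≥ 1, a_{2j}(x) = n_{j+1} and a_{2j+1}(x) = b_{t_{j+1}} − 2. -/

import Mathlib

open Set Filter

/-- The Gauss map `G(t) = 1/t − ⌊1/t⌋`. -/
noncomputable def gmap (t : ℝ) : ℝ := 1 / t - ⌊1 / t⌋

/-- `ra y n = a_{n+1}(y) = ⌊1/G^n(y)⌋`, the regular continued fraction partial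
quotients of `y`. -/
noncomputable def ra (y : ℝ) (n : ℕ) : ℤ := ⌊1 / (gmap^[n] y)⌋

/-- The by-excess continued fraction map `A_0(x) = ⌊1/x + 1⌋ − 1/x`. -/
noncomputable def exm (x : ℝ) : ℝ := ⌊1 / x + 1⌋ - 1 / x

/-- `bEx x n = b_{n+1} = ⌊1/A_0^n(x) + 1⌋`, the by-excess digits of `x`. -/
noncomputable def bEx (x : ℝ) (n : ℕ) : ℤ := ⌊1 / (exm^[n] x) + 1⌋

/-- Given the increasing enumeration `t` (0-indexed: `t j` is the paper's `t_{j+1}`),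
`nOf t j` is the paper's `n_{j+1}`: `n_1 = t_1` and `n_{j+1} = t_{j+1} − t_j`. -/
def nOf (t : ℕ → ℕ) : ℕ → ℕ
  | 0 => t 0
  | j + 1 => t (j + 1) - t j

/-! Since `A_0 = 1 - G`, we have `A_0 x = 1 - G x`. For `c > 2`,
`A_0 (1 - 1/c) = 1 - 1/(c - 1)` with digit `2`, while for `1 < c < 2` the digit is
`⌊1/(c - 1)⌋ + 2` and `A_0 (1 - 1/c) = 1 - G (c - 1)`. So from `1 - z` with `1/z = a + G z`
the by-excess map emits `a - 1` digits `2`, then the digit `⌊1/G z⌋ + 2`, and lands on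
`1 - G² z`: each pair `(a_{2j}, a_{2j+1})` of partial quotients of `x` produces one such block
of by-excess digits. -/

open Function

lemma gmap_eq_fract (z : ℝ) : gmap z = Int.fract (1 / z) := rfl

lemma gmap_lt_one (z : ℝ) : gmap z < 1 := Int.fract_lt_one _

lemma exm_eq_one_sub_gmap (y : ℝ) : exm y = 1 - gmap y := by
  rw [exm, gmap, Int.floor_add_one]
  push_cast
  ring

lemma bEx_add (y : ℝ) (m k : ℕ) : bEx y (m + k) = bEx (exm^[m] y) k := by
  rw [bEx, bEx, ← iterate_add_apply, Nat.add_comm k m]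

lemma irrational_gmap {z : ℝ} (hz : Irrational z) : Irrational (gmap z) :=
  (one_div z ▸ hz.inv).sub_intCast _

lemma irrational_gmap_iterate {z : ℝ} (hz : Irrational z) (n : ℕ) :
    Irrational (gmap^[n] z) := by
  induction n with
  | zero => exact hz
  | succ n ih => rw [iterate_succ_apply']; exact irrational_gmap ih

lemma gmap_pos_of_irrational {z : ℝ} (hz : Irrational z) : 0 < gmap z :=
  (Int.fract_nonneg _).lt_of_ne' (by exact_mod_cast (irrational_gmap hz).ne_int 0)

lemma one_div_gmap_iterate (y : ℝ) (n : ℕ) : 1 / gmap^[n] y = ra y n + gmap^[n + 1] y := by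
  rw [iterate_succ_apply', gmap_eq_fract, ra, Int.floor_add_fract]

lemma gmap_iterate_succ_pos {x : ℝ} (hirr : Irrational x) (n : ℕ) : 0 < gmap^[n + 1] x := by
  rw [iterate_succ_apply']
  exact gmap_pos_of_irrational (irrational_gmap_iterate hirr n)

lemma one_le_ra_succ {x : ℝ} (hirr : Irrational x) (n : ℕ) : 1 ≤ ra x (n + 1) := by
  have hpos := gmap_iterate_succ_pos hirr n
  have hlt : gmap^[n + 1] x < 1 := by rw [iterate_succ_apply']; exact gmap_lt_one _
  exact Int.le_floor.2 (by rw [Int.cast_one, le_div_iff₀ hpos]; linarith)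

section OneSubOneDiv

variable {c : ℝ}

lemma one_div_one_sub_one_div (hc : 1 < c) : 1 / (1 - 1 / c) = 1 / (c - 1) + 1 := by
  have : c - 1 ≠ 0 := by linarith
  field_simp
  ring

lemma floor_one_div_one_sub_one_div_add_one (hc : 1 < c) :
    ⌊1 / (1 - 1 / c) + 1⌋ = ⌊1 / (c - 1)⌋ + 2 := by
  rw [one_div_one_sub_one_div hc, add_assoc, one_add_one_eq_two,
    ← Int.cast_ofNat, Int.floor_add_intCast]

lemma exm_one_sub_one_div (hc : 1 < c) : exm (1 - 1 / c) = 1 - gmap (c - 1) := by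
  rw [exm_eq_one_sub_gmap, gmap_eq_fract, gmap_eq_fract, one_div_one_sub_one_div hc,
    Int.fract_add_one]

lemma exm_one_sub_one_div_of_two_lt (hc : 2 < c) : exm (1 - 1 / c) = 1 - 1 / (c - 1) := by
  rw [exm_one_sub_one_div (by linarith), gmap_eq_fract, Int.fract_eq_self.2]
  have : 0 < c - 1 := by linarith
  exact ⟨by positivity, by rw [div_lt_one this]; linarith⟩

lemma exm_iterate_one_sub_one_div {k : ℕ} (h : (k : ℝ) + 1 < c) :
    exm^[k] (1 - 1 / c) = 1 - 1 / (c - k) := by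
  induction k generalizing c with
  | zero => simp
  | succ k ih =>
    push_cast at h
    rw [iterate_succ_apply, exm_one_sub_one_div_of_two_lt (by linarith), ih (by linarith)]
    push_cast
    ring_nf

lemma exm_iterate_one_sub_one_div_of_lt {k : ℕ} (hk : 0 < k) (h : (k : ℝ) < c) :
    exm^[k] (1 - 1 / c) = 1 - gmap (c - k) := by
  obtain ⟨m, rfl⟩ := Nat.exists_eq_add_of_lt hk
  push_cast at h ⊢
  rw [zero_add, iterate_succ_apply', exm_iterate_one_sub_one_div (by linarith),
    exm_one_sub_one_div (by linarith)]
  ring_nf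

lemma bEx_one_sub_one_div {k : ℕ} (h : (k : ℝ) + 1 < c) :
    bEx (1 - 1 / c) k = ⌊1 / (c - k - 1)⌋ + 2 := by
  rw [bEx, exm_iterate_one_sub_one_div h, floor_one_div_one_sub_one_div_add_one (by linarith),
    sub_sub]

end OneSubOneDiv

lemma bEx_zero (x : ℝ) : bEx x 0 = ra x 0 + 1 := by
  rw [bEx, ra, iterate_zero_apply, iterate_zero_apply, Int.floor_add_one]

lemma two_le_ra_zero {x : ℝ} (h0 : 0 < x) (h2 : x < 1 / 2) : 2 ≤ ra x 0 :=
  Int.le_floor.2 (by rw [iterate_zero_apply, Int.cast_ofNat, le_div_iff₀ h0]; linarith)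

/-- The predicted positions (1-indexed) of the digits `b_n ≥ 3`: `t_1 = 1` and
`t_{j+2} = t_{j+1} + a_{2j+2}`. -/
noncomputable def largeDigitPos (x : ℝ) : ℕ → ℕ
  | 0 => 1
  | j + 1 => largeDigitPos x j + (ra x (2 * j + 1)).toNat

section LargeDigitPos

variable {x : ℝ}

lemma toNat_ra_succ (hirr : Irrational x) (n : ℕ) : ((ra x (n + 1)).toNat : ℤ) = ra x (n + 1) :=
  Int.toNat_of_nonneg (zero_le_one.trans (one_le_ra_succ hirr n))

lemma one_div_gmap_iterate_succ (hirr : Irrational x) (n : ℕ) :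
    1 / gmap^[n + 1] x = (ra x (n + 1)).toNat + gmap^[n + 2] x := by
  rw [one_div_gmap_iterate, ← toNat_ra_succ hirr]
  push_cast
  rfl

lemma strictMono_largeDigitPos (hirr : Irrational x) : StrictMono (largeDigitPos x) :=
  strictMono_nat_of_lt_succ fun j => by
    have := one_le_ra_succ hirr (2 * j)
    simp only [largeDigitPos]
    omega

lemma exm_iterate_largeDigitPos (hirr : Irrational x) (j : ℕ) :
    exm^[largeDigitPos x j] x = 1 - gmap^[2 * j + 1] x := by
  induction j with
  | zero => exact exm_eq_one_sub_gmap x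
  | succ j ih =>
    have ha : 0 < (ra x (2 * j + 1)).toNat := by have := one_le_ra_succ hirr (2 * j); omega
    have hw := gmap_iterate_succ_pos hirr (2 * j + 1)
    rw [largeDigitPos, Nat.add_comm, iterate_add_apply, ih, ← one_div_one_div (gmap^[_] x),
      one_div_gmap_iterate_succ hirr, exm_iterate_one_sub_one_div_of_lt ha (by linarith),
      add_sub_cancel_left, ← iterate_succ_apply' gmap]
    rfl

lemma exm_iterate_largeDigitPos_eq_one_sub_one_div (hirr : Irrational x) (j : ℕ) :
    exm^[largeDigitPos x j] x = 1 - 1 / ((ra x (2 * j + 1)).toNat + gmap^[2 * j + 2] x) := by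
  rw [exm_iterate_largeDigitPos hirr, ← one_div_one_div (gmap^[_] x),
    one_div_gmap_iterate_succ hirr]

lemma bEx_largeDigitPos_add (hirr : Irrational x) {j k : ℕ}
    (hk : largeDigitPos x j + k + 1 < largeDigitPos x (j + 1)) :
    bEx x (largeDigitPos x j + k) = 2 := by
  have hka : (k : ℝ) + 2 ≤ (ra x (2 * j + 1)).toNat := by
    simp only [largeDigitPos] at hk
    exact_mod_cast (by omega : k + 2 ≤ (ra x (2 * j + 1)).toNat)
  have hw := gmap_iterate_succ_pos hirr (2 * j + 1)
  rw [bEx_add, exm_iterate_largeDigitPos_eq_one_sub_one_div hirr,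
    bEx_one_sub_one_div (by linarith), add_eq_right, Int.floor_eq_zero_iff]
  have hd : 1 < ((ra x (2 * j + 1)).toNat : ℝ) + gmap^[2 * j + 2] x - k - 1 := by linarith
  exact ⟨by positivity, (div_lt_one (by linarith)).2 hd⟩

lemma bEx_largeDigitPos_sub_one (hirr : Irrational x) (j : ℕ) :
    bEx x (largeDigitPos x (j + 1) - 1) = ra x (2 * j + 2) + 2 := by
  have ha : 0 < (ra x (2 * j + 1)).toNat := by have := one_le_ra_succ hirr (2 * j); omega
  have hw := gmap_iterate_succ_pos hirr (2 * j + 1)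
  have hpos : largeDigitPos x (j + 1) - 1 =
      largeDigitPos x j + ((ra x (2 * j + 1)).toNat - 1) := by
    simp only [largeDigitPos]
    omega
  rw [hpos, bEx_add, exm_iterate_largeDigitPos_eq_one_sub_one_div hirr,
    bEx_one_sub_one_div (by push_cast [Nat.cast_pred ha]; linarith),
    Nat.cast_pred ha, ra]
  congr 3
  ring

lemma three_le_bEx_iff (hirr : Irrational x) (h0 : 0 < x) (h2 : x < 1 / 2) (n : ℕ) :
    3 ≤ bEx x n ↔ n + 1 ∈ Set.range (largeDigitPos x) := by
  have hs := strictMono_largeDigitPos hirr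
  constructor
  · intro h3
    rcases (Nat.le_add_left 1 n).eq_or_lt with h | h
    · exact ⟨0, h⟩
    obtain ⟨j, hlt, hle⟩ := hs.exists_between_of_tendsto_atTop hs.tendsto_atTop h
    rcases hle.eq_or_lt with heq | hle
    · exact ⟨j + 1, heq.symm⟩
    have hdigit := bEx_largeDigitPos_add hirr (j := j) (k := n - largeDigitPos x j) (by omega)
    rw [Nat.add_sub_cancel' (by omega)] at hdigit
    omega
  · rintro ⟨j, hj⟩
    cases j with
    | zero =>
      obtain rfl : n = 0 := by simp only [largeDigitPos] at hj; omega
      have := two_le_ra_zero h0 h2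
      rw [bEx_zero]
      omega
    | succ j =>
      have : 1 ≤ ra x (2 * j + 2) := one_le_ra_succ hirr (2 * j + 1)
      rw [show n = largeDigitPos x (j + 1) - 1 by omega, bEx_largeDigitPos_sub_one hirr]
      omega

end LargeDigitPos

/-- Proposition 2.9: let `x ∈ (0,1/2)` be irrational with by-excess digits
`b_1, b_2, …`, and let `t_1 < t_2 < ⋯` enumerate `{n ≥ 1 : b_n ≥ 3}` (here `t j` is
the paper's `t_{j+1}`). Then `b_1 ≥ 3` (so `t_1 = 1` and `n_1 = 1`) and the regular
continued fraction of `x` is `(b_1 − 1, n_2, b_{t_2} − 2, n_3, b_{t_3} − 2, …)`, i.e.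
`a_1(x) = b_1 − 1` and, for all `j ≥ 1`, `a_{2j}(x) = n_{j+1}` and
`a_{2j+1}(x) = b_{t_{j+1}} − 2`. -/
theorem cf_via_excess_small (x : ℝ) (hirr : Irrational x)
    (hx : x ∈ Set.Ioo (0 : ℝ) (1 / 2)) (t : ℕ → ℕ)
    (ht1 : ∀ j, 1 ≤ t j) (hmono : StrictMono t)
    (hmem : ∀ j, 3 ≤ bEx x (t j - 1))
    (hall : ∀ n : ℕ, 3 ≤ bEx x n → ∃ j, t j = n + 1) :
    3 ≤ bEx x 0 ∧ t 0 = 1 ∧ ra x 0 = bEx x 0 - 1 ∧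
      ∀ j : ℕ, ra x (2 * j + 1) = (nOf t (j + 1) : ℤ) ∧
        ra x (2 * j + 2) = bEx x (t (j + 1) - 1) - 2 := by
  obtain ⟨h0, h2⟩ := hx
  have hs := strictMono_largeDigitPos hirr
  have ht : t = largeDigitPos x := by
    refine (hmono.range_inj hs).1 (Set.Subset.antisymm ?_ ?_)
    · rintro _ ⟨j, rfl⟩
      simpa [Nat.sub_add_cancel (ht1 j)] using (three_le_bEx_iff hirr h0 h2 _).1 (hmem j)
    · rintro _ ⟨j, rfl⟩
      have hj : 1 ≤ largeDigitPos x j := hs.monotone (Nat.zero_le j)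
      obtain ⟨k, hk⟩ :=
        hall _ ((three_le_bEx_iff hirr h0 h2 (largeDigitPos x j - 1)).2 ⟨j, by omega⟩)
      exact ⟨k, by omega⟩
  subst ht
  have := two_le_ra_zero h0 h2
  refine ⟨by rw [bEx_zero]; omega, rfl, by rw [bEx_zero]; ring, fun j => ⟨?_, ?_⟩⟩
  · rw [nOf, largeDigitPos, Nat.add_sub_cancel_left, toNat_ra_succ hirr]
  · rw [bEx_largeDigitPos_sub_one hirr]
    ring
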